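/- arXiv:1905.07693 — 2 statements merged into one kernel-verified Lean document; each statement's English description precedes it below -/
import Mathlib

section
/- Let B > 0 and c > 0 be real numbers, let (A_ν) be a family of nonnegative real numbers indexed by multi-indices ν, and let (Υ_j)_{j≥1} be a sequence of nonnegative real numbers. Suppose that A_0 = B and that for every multi-index ν ≠ 0 one has A_ν = ∑_{j≥1} ∑_{k=1}^{ν_j} binom(ν_j, k) c^k Υ_j A_{ν − k·e_j}. Then for every multi-index ν, A_ν = c^{|ν|} B ∑_{m ≤ ν} |m|! Υ^m ∏_{i≥1} S(ν_i, m_i). -/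
/-!
Since `k! S(n, k) = Δᵏ (x ↦ xⁿ) (0)` and `Δ (x ↦ xⁿ) = ∑_{k ≥ 1} C(n, k) x^(n-k)`, one gets
`∑_{k=1}^{n} C(n, k) S(n - k, t) = (t + 1) S(n, t + 1)`. Plugging the closed form into the
right-hand side of the recursion and applying this identity in the coordinate `j` produces, after
the shift `m ↦ m + e_j`, the terms `(|m| - 1)! m_j Υ^m ∏ᵢ S(νᵢ, mᵢ)`; summing over `j` turns `m_j`
into `|m|`, so the closed form satisfies the recursion. The recursion determines `A` from `A 0`.
-/

/-- Stirling numbers of the second kind, as real numbers: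
`S(n,k) = (1/k!) ∑_{j=0}^{k} (−1)^{k−j} binom(k,j) j^n`. -/
noncomputable def stirlingS2 (n k : ℕ) : ℝ :=
  (1 / (k.factorial : ℝ)) *
    ∑ j ∈ Finset.range (k + 1), (-1 : ℝ) ^ (k - j) * (k.choose j : ℝ) * (j : ℝ) ^ n

/-- The order `|ν| = ∑_j ν_j` of a multi-index `ν`. -/
def multiOrder (ν : ℕ →₀ ℕ) : ℕ := ν.sum fun _ k => k

/-- `Υ^m = ∏_{j : m_j ≠ 0} Υ_j^{m_j}`. -/
noncomputable def multiPow (Υ : ℕ → ℝ) (m : ℕ →₀ ℕ) : ℝ := m.prod fun j k => Υ j ^ k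

open Finset fwdDiff

lemma factorial_mul_stirlingS2 (n k : ℕ) :
    k.factorial * stirlingS2 n k = (Δ_[1])^[k] (fun x : ℝ => x ^ n) 0 := by
  rw [fwdDiff_iter_eq_sum_shift, stirlingS2, ← mul_assoc, one_div,
    mul_inv_cancel₀ (by positivity), one_mul]
  simp

lemma stirlingS2_eq_zero_of_lt {n k : ℕ} (h : n < k) : stirlingS2 n k = 0 := by
  have h' := factorial_mul_stirlingS2 n k
  rw [fwdDiff_iter_pow_eq_zero_of_lt h] at h'
  simpa [Nat.factorial_ne_zero] using h'

lemma stirlingS2_zero_zero : stirlingS2 0 0 = 1 := by simp [stirlingS2]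

lemma stirlingS2_zero_right {n : ℕ} (h : n ≠ 0) : stirlingS2 n 0 = 0 := by
  simp [stirlingS2, h]

lemma fwdDiff_pow_eq_sum {R : Type*} [CommRing R] (n : ℕ) :
    Δ_[1] (fun x : R => x ^ n) = ∑ k ∈ Icc 1 n, (n.choose k : R) • fun x : R => x ^ (n - k) := by
  ext x
  simp only [fwdDiff, Finset.sum_apply, Pi.smul_apply, smul_eq_mul]
  rw [add_comm x, add_pow, range_eq_Ico, sum_eq_sum_Ico_succ_bot (by omega)]
  simp [mul_comm]
  rfl

lemma sum_choose_mul_stirlingS2 (n t : ℕ) :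
    ∑ k ∈ Icc 1 n, (n.choose k : ℝ) * stirlingS2 (n - k) t = (t + 1) * stirlingS2 n (t + 1) := by
  have h := factorial_mul_stirlingS2 n (t + 1)
  rw [Function.iterate_succ_apply, fwdDiff_pow_eq_sum, fwdDiff_iter_finsetSum] at h
  simp only [fwdDiff_iter_const_smul, Finset.sum_apply, Pi.smul_apply, smul_eq_mul,
    ← factorial_mul_stirlingS2, Nat.factorial_succ] at h
  apply mul_left_cancel₀ (by positivity : (t.factorial : ℝ) ≠ 0)
  rw [mul_sum, sum_congr rfl fun k _ => mul_left_comm _ _ _, ← h]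
  push_cast
  ring

section Recursion

variable {ι R : Type*} [Semiring R]

lemma Finsupp.sub_single_lt {ν : ι →₀ ℕ} {j : ι} {k : ℕ} (hk : k ∈ Icc 1 (ν j)) :
    ν - Finsupp.single j k < ν := by
  classical
  refine lt_of_le_of_ne tsub_le_self fun h => ?_
  have hj := congrArg (· j) h
  simp only [Finsupp.tsub_apply, Finsupp.single_eq_same] at hj
  have := mem_Icc.1 hk
  omega

lemma Finsupp.eq_of_eq_sum_sub_single {A A' : (ι →₀ ℕ) → R} (w : (ι →₀ ℕ) → ι → ℕ → R)
    (h0 : A 0 = A' 0)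
    (hA : ∀ ν ≠ 0, A ν = ∑ j ∈ ν.support, ∑ k ∈ Icc 1 (ν j), w ν j k * A (ν - .single j k))
    (hA' : ∀ ν ≠ 0, A' ν = ∑ j ∈ ν.support, ∑ k ∈ Icc 1 (ν j), w ν j k * A' (ν - .single j k)) :
    A = A' := by
  funext ν
  induction ν using WellFoundedLT.induction with
  | ind ν ih =>
    rcases eq_or_ne ν 0 with rfl | hν
    · exact h0
    rw [hA ν hν, hA' ν hν]
    exact Finset.sum_congr rfl fun j _ => Finset.sum_congr rfl fun k hk => by
      rw [ih _ (Finsupp.sub_single_lt hk)]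

end Recursion

lemma Finset.sum_Iic_add_single {ι M : Type*} [DecidableEq ι] [AddCommMonoid M] (ν : ι →₀ ℕ)
    (j : ι) {f : (ι →₀ ℕ) → M} (hf : ∀ m, m j = 0 → f m = 0) :
    ∑ m ∈ Iic ν, f (m + .single j 1) = ∑ m ∈ Iic (ν + .single j 1), f m := by
  have hmap : (Iic ν).map (addRightEmbedding (.single j 1)) =
      Icc (.single j 1) (ν + .single j 1) := by
    rw [Iic_eq_Icc, map_add_right_Icc, bot_eq_zero, zero_add]
  calc ∑ m ∈ Iic ν, f (m + .single j 1) = ∑ m ∈ Icc (.single j 1) (ν + .single j 1), f m := by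
        rw [← hmap, sum_map]
        rfl
    _ = _ := sum_subset Icc_subset_Iic_self fun m hm hm' => hf m ?_
  by_contra hmj
  exact hm' (mem_Icc.2 ⟨Finsupp.single_le_iff.2 (Nat.one_le_iff_ne_zero.2 hmj), mem_Iic.1 hm⟩)

lemma multiOrder_add (a b : ℕ →₀ ℕ) : multiOrder (a + b) = multiOrder a + multiOrder b :=
  map_add Finsupp.degree a b

lemma multiOrder_single (j k : ℕ) : multiOrder (.single j k) = k := Finsupp.degree_single j k

lemma multiOrder_eq_zero_iff {m : ℕ →₀ ℕ} : multiOrder m = 0 ↔ m = 0 :=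
  Finsupp.degree_eq_zero_iff m

lemma multiOrder_sub_single {ν : ℕ →₀ ℕ} {j k : ℕ} (hk : k ≤ ν j) :
    multiOrder (ν - .single j k) + k = multiOrder ν := by
  conv_rhs => rw [← tsub_add_cancel_of_le (Finsupp.single_le_iff.2 hk)]
  rw [multiOrder_add, multiOrder_single]

lemma multiOrder_eq_sum_of_le {m ν : ℕ →₀ ℕ} (hmν : m ≤ ν) :
    multiOrder m = ∑ j ∈ ν.support, m j :=
  sum_subset (Finsupp.support_mono hmν) fun _ _ hj => Finsupp.notMem_support_iff.1 hj

lemma multiPow_add (Υ : ℕ → ℝ) (a b : ℕ →₀ ℕ) :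
    multiPow Υ (a + b) = multiPow Υ a * multiPow Υ b :=
  Finsupp.prod_add_index' (fun _ => pow_zero _) fun _ _ _ => pow_add _ _ _

lemma multiPow_single (Υ : ℕ → ℝ) (j k : ℕ) : multiPow Υ (.single j k) = Υ j ^ k :=
  Finsupp.prod_single_index (pow_zero _)

/-- Since `S(μᵢ, mᵢ) = 0` for `mᵢ > μᵢ` and `S(0, 0) = 1`, both the range of summation and the
range of the product can be enlarged. -/
lemma sum_Iic_mul_prod_stirlingS2_of_le {μ ν : ℕ →₀ ℕ} (hμν : μ ≤ ν) {s : Finset ℕ}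
    (hs : ν.support ⊆ s) (g : (ℕ →₀ ℕ) → ℝ) :
    ∑ m ∈ Iic μ, g m * ∏ i ∈ μ.support, stirlingS2 (μ i) (m i) =
      ∑ m ∈ Iic ν, g m * ∏ i ∈ s, stirlingS2 (μ i) (m i) := by
  refine (sum_congr rfl fun m hm => ?_).trans (sum_subset (Iic_subset_Iic.2 hμν) ?_)
  · congr 1
    refine prod_subset ((Finsupp.support_mono hμν).trans hs) fun i _ hi => ?_
    have hμi : μ i = 0 := Finsupp.notMem_support_iff.1 hi
    have hmi : m i = 0 := by simpa [hμi] using Finsupp.le_def.1 (mem_Iic.1 hm) i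
    rw [hμi, hmi, stirlingS2_zero_zero]
  · intro m hm hm'
    obtain ⟨i, hi⟩ : ∃ i, μ i < m i := by simpa [Finsupp.le_def] using hm'
    have his : i ∈ s := hs <| Finsupp.support_mono (mem_Iic.1 hm) <|
      Finsupp.mem_support_iff.2 (by omega)
    exact mul_eq_zero_of_right _ (prod_eq_zero his (stirlingS2_eq_zero_of_lt hi))

lemma prod_stirlingS2_eq_mul_prod_erase {s : Finset ℕ} {j : ℕ} (hj : j ∈ s)
    {μ m μ' m' : ℕ →₀ ℕ} (hμ : ∀ i ≠ j, μ i = μ' i) (hm : ∀ i ≠ j, m i = m' i) :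
    ∏ i ∈ s, stirlingS2 (μ i) (m i) =
      stirlingS2 (μ j) (m j) * ∏ i ∈ s.erase j, stirlingS2 (μ' i) (m' i) := by
  rw [← mul_prod_erase s _ hj]
  congr 1
  exact prod_congr rfl fun i hi => by rw [hμ i (ne_of_mem_erase hi), hm i (ne_of_mem_erase hi)]

noncomputable def stirlingSum (Υ : ℕ → ℝ) (ν : ℕ →₀ ℕ) : ℝ :=
  ∑ m ∈ Iic ν, ((multiOrder m).factorial : ℝ) * multiPow Υ m *
    ∏ i ∈ ν.support, stirlingS2 (ν i) (m i)

lemma stirlingSum_zero (Υ : ℕ → ℝ) : stirlingSum Υ 0 = 1 := by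
  have hIic : Iic (0 : ℕ →₀ ℕ) = {0} := by
    ext m
    simp
  simp [stirlingSum, hIic, multiOrder, multiPow]

lemma sum_choose_mul_stirlingSum_sub_single (Υ : ℕ → ℝ) {ν : ℕ →₀ ℕ} {j : ℕ}
    (hj : j ∈ ν.support) :
    ∑ k ∈ Icc 1 (ν j), ((ν j).choose k : ℝ) * Υ j * stirlingSum Υ (ν - .single j k) =
      ∑ m ∈ Iic ν, ((multiOrder m - 1).factorial * m j : ℝ) * multiPow Υ m *
        ∏ i ∈ ν.support, stirlingS2 (ν i) (m i) := by
  set P : (ℕ →₀ ℕ) → ℝ := fun m => ∏ i ∈ ν.support.erase j, stirlingS2 (ν i) (m i)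
  have hsub (k : ℕ) : stirlingSum Υ (ν - .single j k) = ∑ m ∈ Iic ν,
      (multiOrder m).factorial * multiPow Υ m * (stirlingS2 (ν j - k) (m j) * P m) := by
    rw [stirlingSum, sum_Iic_mul_prod_stirlingS2_of_le tsub_le_self subset_rfl]
    refine sum_congr rfl fun m _ => ?_
    rw [prod_stirlingS2_eq_mul_prod_erase (μ' := ν) (m' := m) hj
      (fun i hi => by simp [hi.symm]) fun _ _ => rfl]
    simp [P]
  have hshift (m : ℕ →₀ ℕ) : ∏ i ∈ ν.support, stirlingS2 (ν i) ((m + .single j 1) i) =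
      stirlingS2 (ν j) (m j + 1) * P m := by
    rw [prod_stirlingS2_eq_mul_prod_erase (μ' := ν) (m' := m) hj (fun _ _ => rfl)
      fun i hi => by simp [hi.symm]]
    simp [P]
  calc _ = ∑ m ∈ Iic ν, (multiOrder m).factorial * multiPow Υ m * Υ j *
        (∑ k ∈ Icc 1 (ν j), (ν j).choose k * stirlingS2 (ν j - k) (m j)) * P m := by
        simp only [hsub, mul_sum, sum_mul]
        rw [sum_comm]
        exact sum_congr rfl fun m _ => sum_congr rfl fun k _ => by ring
    _ = ∑ m ∈ Iic ν, ((multiOrder (m + .single j 1) - 1).factorial * (m + .single j 1) j : ℝ) *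
        multiPow Υ (m + .single j 1) *
          ∏ i ∈ ν.support, stirlingS2 (ν i) ((m + .single j 1) i) := by
        refine sum_congr rfl fun m _ => ?_
        rw [sum_choose_mul_stirlingS2, hshift, multiPow_add, multiPow_single, multiOrder_add,
          multiOrder_single, Nat.add_sub_cancel]
        simp only [Finsupp.add_apply, Finsupp.single_eq_same]
        push_cast
        ring
    _ = ∑ m ∈ Iic (ν + .single j 1), ((multiOrder m - 1).factorial * m j : ℝ) * multiPow Υ m *
          ∏ i ∈ ν.support, stirlingS2 (ν i) (m i) :=
        sum_Iic_add_single ν j (f := fun m => ((multiOrder m - 1).factorial * m j : ℝ) *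
          multiPow Υ m * ∏ i ∈ ν.support, stirlingS2 (ν i) (m i)) fun m hm => by simp [hm]
    _ = _ := (sum_Iic_mul_prod_stirlingS2_of_le le_self_add
        (Finsupp.support_add.trans (union_subset subset_rfl (by simpa using hj))) _).symm

lemma stirlingSum_eq_sum_sub_single (Υ : ℕ → ℝ) {ν : ℕ →₀ ℕ} (hν : ν ≠ 0) :
    stirlingSum Υ ν = ∑ j ∈ ν.support, ∑ k ∈ Icc 1 (ν j),
      ((ν j).choose k : ℝ) * Υ j * stirlingSum Υ (ν - .single j k) := by
  rw [sum_congr rfl fun j hj => sum_choose_mul_stirlingSum_sub_single Υ hj, sum_comm, stirlingSum]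
  refine sum_congr rfl fun m hm => ?_
  rw [← sum_mul, ← sum_mul, ← mul_sum, ← Nat.cast_sum, ← multiOrder_eq_sum_of_le (mem_Iic.1 hm)]
  rcases eq_or_ne (multiOrder m) 0 with hm0 | hm0
  · obtain ⟨i, hi⟩ := Finsupp.support_nonempty_iff.2 hν
    have hmi : m i = 0 := by simp [multiOrder_eq_zero_iff.1 hm0]
    rw [prod_eq_zero hi (by rw [hmi]; exact stirlingS2_zero_right (Finsupp.mem_support_iff.1 hi))]
    simp
  · rw [← Nat.cast_mul, mul_comm ((multiOrder m - 1).factorial), Nat.mul_factorial_pred hm0]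

theorem stmt_1_general (B c : ℝ)
    (A : (ℕ →₀ ℕ) → ℝ)
    (Υ : ℕ → ℝ)
    (h0 : A 0 = B)
    (hrec : ∀ ν : ℕ →₀ ℕ, ν ≠ 0 →
      A ν = ∑ j ∈ ν.support, ∑ k ∈ Finset.Icc 1 (ν j),
        ((ν j).choose k : ℝ) * c ^ k * Υ j * A (ν - Finsupp.single j k)) :
    ∀ ν : ℕ →₀ ℕ,
      A ν = c ^ multiOrder ν * B *
        ∑ m ∈ Finset.Iic ν,
          ((multiOrder m).factorial : ℝ) * multiPow Υ m *
            ∏ i ∈ ν.support, stirlingS2 (ν i) (m i) := by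
  have hclosed : ∀ ν ≠ 0, c ^ multiOrder ν * B * stirlingSum Υ ν =
      ∑ j ∈ ν.support, ∑ k ∈ Icc 1 (ν j), ((ν j).choose k : ℝ) * c ^ k * Υ j *
        (c ^ multiOrder (ν - .single j k) * B * stirlingSum Υ (ν - .single j k)) := by
    intro ν hν
    rw [stirlingSum_eq_sum_sub_single Υ hν, mul_sum]
    refine sum_congr rfl fun j _ => ?_
    rw [mul_sum]
    refine sum_congr rfl fun k hk => ?_
    rw [← multiOrder_sub_single (mem_Icc.1 hk).2, pow_add]
    ring
  exact congrFun (Finsupp.eq_of_eq_sum_sub_single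
    (A' := fun ν => c ^ multiOrder ν * B * stirlingSum Υ ν) _
    (by simp [h0, stirlingSum_zero, multiOrder]) hrec hclosed)

theorem stmt_1 (B c : ℝ) (hB : 0 < B) (hc : 0 < c)
    (A : (ℕ →₀ ℕ) → ℝ) (hA : ∀ ν, 0 ≤ A ν)
    (Υ : ℕ → ℝ) (hΥ : ∀ j, 0 ≤ Υ j)
    (h0 : A 0 = B)
    (hrec : ∀ ν : ℕ →₀ ℕ, ν ≠ 0 →
      A ν = ∑ j ∈ ν.support, ∑ k ∈ Finset.Icc 1 (ν j),
        ((ν j).choose k : ℝ) * c ^ k * Υ j * A (ν - Finsupp.single j k)) :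
    ∀ ν : ℕ →₀ ℕ,
      A ν = c ^ multiOrder ν * B *
        ∑ m ∈ Finset.Iic ν,
          ((multiOrder m).factorial : ℝ) * multiPow Υ m *
            ∏ i ∈ ν.support, stirlingS2 (ν i) (m i) :=
  stmt_1_general B c A Υ h0 hrec
end

section
/- Let (Y_j)_{j≥1} be a sequence of independent random variables on a probability space, each uniformly distributed on [−1/2, 1/2], and let (a_j)_{j≥1} be a real sequence with ∑_{j≥1} |a_j| < ∞. Then the fourth moment of the almost surely absolutely convergent random series W := ∑_{j≥1} Y_j a_j satisfies E[W⁴] = (1/80) ∑_{j≥1} a_j⁴ + (1/24) ∑_{j≥1} ∑_{k≥j+1} a_j² a_k². -/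
/-!
The partial sums `S n = ∑ j < n, Y j * a j` are bounded by `∑ |a j| / 2`, so by dominated
convergence `E[W⁴] = lim E[(S n)⁴]`. For independent centred summands `X j`, expanding
`(S n + X n)⁴` binomially and factorising `E[(S n)^k (X n)^m] = E[(S n)^k] E[(X n)^m]`, the
terms with `k = 1` or `m = 1` vanish, which leaves
`E[(S (n+1))⁴] = E[(S n)⁴] + 6 E[(S n)²] E[(X n)²] + E[(X n)⁴]`.
With `E[Y⁴] = 1/80` and `E[Y²] = 1/12` this telescopes to the claimed formula.
-/

open MeasureTheory ProbabilityTheory Filter Finset Topology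

section Uniform

variable {Ω : Type*} [MeasurableSpace Ω] {P : Measure Ω} {X : Ω → ℝ}

lemma ae_mem_Icc_of_map_eq_restrict {a b : ℝ} (hX : AEMeasurable X P)
    (hmap : P.map X = volume.restrict (Set.Icc a b)) : ∀ᵐ ω ∂P, X ω ∈ Set.Icc a b :=
  ae_of_ae_map hX (hmap ▸ ae_restrict_mem measurableSet_Icc)

lemma integral_pow_of_map_eq_restrict {a b : ℝ} (hX : AEMeasurable X P)
    (hmap : P.map X = volume.restrict (Set.Icc a b)) (hab : a ≤ b) (k : ℕ) :
    ∫ ω, X ω ^ k ∂P = (b ^ (k + 1) - a ^ (k + 1)) / (k + 1) := by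
  rw [← integral_map hX (continuous_pow k).aestronglyMeasurable, hmap,
    integral_Icc_eq_integral_Ioc, ← intervalIntegral.integral_of_le hab, integral_pow]

lemma ae_abs_mul_le_of_map_eq_restrict (hX : AEMeasurable X P)
    (hmap : P.map X = volume.restrict (Set.Icc (-(1 / 2)) (1 / 2))) (c : ℝ) :
    ∀ᵐ ω ∂P, |X ω * c| ≤ |c| / 2 :=
  (ae_mem_Icc_of_map_eq_restrict hX hmap).mono fun ω h => by
    rw [abs_mul, div_eq_inv_mul, ← one_div]
    exact mul_le_mul_of_nonneg_right (abs_le.2 h) (abs_nonneg c)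

end Uniform

section IndependentSums

variable {Ω : Type*} [MeasurableSpace Ω] {P : Measure Ω}

lemma MeasureTheory.MemLp.integrable_pow_of_le [IsFiniteMeasure P] {X : Ω → ℝ} {n m : ℕ}
    (hX : MemLp X n P) (hm : m ≤ n) : Integrable (fun ω => X ω ^ m) P := by
  have h := (hX.mono_exponent (by exact_mod_cast hm : (m : ENNReal) ≤ n)).integrable_norm_pow'
  exact h.mono' (hX.aestronglyMeasurable.pow m) (Eventually.of_forall fun ω => by simp)

lemma ProbabilityTheory.IndepFun.integral_add_pow [IsFiniteMeasure P] {X Z : Ω → ℝ}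
    (hXZ : IndepFun X Z P) {n : ℕ} (hX : MemLp X n P) (hZ : MemLp Z n P) :
    ∫ ω, (X ω + Z ω) ^ n ∂P
      = ∑ m ∈ range (n + 1), (∫ ω, X ω ^ m ∂P) * (∫ ω, Z ω ^ (n - m) ∂P) * n.choose m := by
  simp_rw [add_pow]
  rw [integral_finsetSum]
  · refine sum_congr rfl fun m _ => ?_
    rw [integral_mul_const, hXZ.integral_fun_comp_mul_comp hX.aemeasurable hZ.aemeasurable
      (continuous_pow m).aestronglyMeasurable (continuous_pow (n - m)).aestronglyMeasurable]
  · intro m hm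
    refine Integrable.mul_const ?_ _
    exact (hXZ.comp (measurable_id.pow_const m) (measurable_id.pow_const (n - m))).integrable_mul
      (hX.integrable_pow_of_le (mem_range_succ_iff.1 hm)) (hZ.integrable_pow_of_le (Nat.sub_le n m))

variable {f : ℕ → Ω → ℝ}

lemma integral_sum_range_eq_zero (hint : ∀ j, Integrable (f j) P)
    (hcent : ∀ j, ∫ ω, f j ω ∂P = 0) (n : ℕ) : ∫ ω, ∑ j ∈ range n, f j ω ∂P = 0 := by
  rw [integral_finsetSum _ fun j _ => hint j]
  exact sum_eq_zero fun j _ => hcent j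

namespace ProbabilityTheory.iIndepFun

lemma indepFun_sum_range (hind : iIndepFun f P) (hmeas : ∀ j, Measurable (f j)) (n : ℕ) :
    IndepFun (fun ω => ∑ j ∈ range n, f j ω) (f n) P := by
  simpa only [Finset.sum_fn] using hind.indepFun_finsetSum_of_notMem hmeas notMem_range_self

lemma integral_sum_range_sq [IsProbabilityMeasure P] (hind : iIndepFun f P)
    (hmeas : ∀ j, Measurable (f j)) (hL2 : ∀ j, MemLp (f j) 2 P)
    (hcent : ∀ j, ∫ ω, f j ω ∂P = 0) (n : ℕ) :
    ∫ ω, (∑ j ∈ range n, f j ω) ^ 2 ∂P = ∑ j ∈ range n, ∫ ω, f j ω ^ 2 ∂P := by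
  have hint : ∀ j, Integrable (f j) P := fun j => (hL2 j).integrable one_le_two
  induction n with
  | zero => simp
  | succ n ih =>
    simp_rw [sum_range_succ]
    rw [(hind.indepFun_sum_range hmeas n).integral_add_pow
      (memLp_finsetSum _ fun j _ => hL2 j) (hL2 n)]
    simp only [Nat.reduceAdd, sum_range_succ, range_one, sum_singleton, pow_zero, integral_const,
      probReal_univ, smul_eq_mul, mul_one, tsub_zero, one_mul, Nat.choose_zero_right, Nat.cast_one,
      pow_one, Nat.add_one_sub_one, hcent, mul_zero, Nat.choose_succ_self_right, Nat.cast_ofNat,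
      zero_mul, add_zero, ih, tsub_self, Nat.choose_self, integral_sum_range_eq_zero hint hcent]
    ring

lemma integral_sum_range_pow_four [IsProbabilityMeasure P] (hind : iIndepFun f P)
    (hmeas : ∀ j, Measurable (f j)) (hL4 : ∀ j, MemLp (f j) 4 P)
    (hcent : ∀ j, ∫ ω, f j ω ∂P = 0) (n : ℕ) :
    ∫ ω, (∑ j ∈ range n, f j ω) ^ 4 ∂P
      = ∑ j ∈ range n, ∫ ω, f j ω ^ 4 ∂P
        + 6 * ∑ j ∈ range n, (∫ ω, f j ω ^ 2 ∂P) * ∑ k ∈ range j, ∫ ω, f k ω ^ 2 ∂P := by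
  have hL2 : ∀ j, MemLp (f j) 2 P := fun j => (hL4 j).mono_exponent (by norm_num)
  have hint : ∀ j, Integrable (f j) P := fun j => (hL2 j).integrable one_le_two
  induction n with
  | zero => simp
  | succ n ih =>
    simp_rw [sum_range_succ]
    rw [(hind.indepFun_sum_range hmeas n).integral_add_pow
      (memLp_finsetSum _ fun j _ => hL4 j) (hL4 n)]
    simp only [Nat.reduceAdd, sum_range_succ, range_one, sum_singleton, pow_zero, integral_const,
      probReal_univ, smul_eq_mul, mul_one, tsub_zero, one_mul, Nat.choose, Nat.cast_one, pow_one,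
      Nat.add_one_sub_one, zero_mul, add_zero, Nat.cast_ofNat, Nat.reduceSub, hcent, mul_zero, ih,
      tsub_self, hind.integral_sum_range_sq hmeas hL2 hcent, integral_sum_range_eq_zero hint hcent]
    ring

end ProbabilityTheory.iIndepFun

end IndependentSums

lemma Summable.sq_of_nonneg {ι : Type*} {b : ι → ℝ} (hb : Summable b) (hb0 : ∀ j, 0 ≤ b j) :
    Summable fun j => b j ^ 2 :=
  (hb.mul_left (∑' j, b j)).of_nonneg_of_le (fun j => sq_nonneg _) fun j => by
    rw [sq]; exact mul_le_mul_of_nonneg_right (hb.le_tsum j fun k _ => hb0 k) (hb0 j)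

lemma HasSum.tendsto_sum_range_prod_range {g : ℕ × ℕ → ℝ} {s : ℝ} (hg : HasSum g s) :
    Tendsto (fun n => ∑ p ∈ range n ×ˢ range n, g p) atTop (𝓝 s) := by
  have : Tendsto (fun n => (range n, range n)) atTop atTop := by
    rw [← prod_atTop_atTop_eq]
    exact tendsto_finset_range.prodMk tendsto_finset_range
  exact hg.comp (tendsto_finsetProd_atTop.comp this)

lemma sum_range_mul_sum_range_eq_sum_prod_range (b : ℕ → ℝ) (n : ℕ) :
    ∑ k ∈ range n, b k * ∑ j ∈ range k, b j
      = ∑ p ∈ range n ×ˢ range n, if p.1 < p.2 then b p.1 * b p.2 else 0 := by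
  rw [sum_product_right]
  refine sum_congr rfl fun k hk => ?_
  have hfilter : {j ∈ range n | j < k} = range k := by
    ext j; simp only [mem_filter, mem_range]; have := mem_range.1 hk; omega
  rw [← sum_filter, hfilter, mul_sum]
  exact sum_congr rfl fun j _ => mul_comm _ _

lemma tendsto_sum_range_mul_sum_range {b : ℕ → ℝ} (hb : Summable b) (hb0 : ∀ j, 0 ≤ b j) :
    Tendsto (fun n => ∑ k ∈ range n, b k * ∑ j ∈ range k, b j) atTop
      (𝓝 (∑' j, ∑' k, if j < k then b j * b k else 0)) := by
  have hg : Summable fun p : ℕ × ℕ => if p.1 < p.2 then b p.1 * b p.2 else 0 := by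
    refine (hb.mul_of_nonneg hb hb0 hb0).of_nonneg_of_le (fun p => ?_) (fun p => ?_) <;>
      split_ifs
    exacts [mul_nonneg (hb0 _) (hb0 _), le_rfl, le_rfl, mul_nonneg (hb0 _) (hb0 _)]
  have h := hg.hasSum.tendsto_sum_range_prod_range
  rwa [hg.tsum_prod' hg.prod_factor, ← funext (sum_range_mul_sum_range_eq_sum_prod_range b)] at h

lemma tendsto_integral_sum_range_pow {Ω : Type*} [MeasurableSpace Ω] {P : Measure Ω}
    [IsFiniteMeasure P] {f : ℕ → Ω → ℝ} {b : ℕ → ℝ} (hb : Summable b)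
    (hf : ∀ j, AEStronglyMeasurable (f j) P) (hfb : ∀ j, ∀ᵐ ω ∂P, |f j ω| ≤ b j) (p : ℕ) :
    Tendsto (fun n => ∫ ω, (∑ j ∈ range n, f j ω) ^ p ∂P) atTop
      (𝓝 (∫ ω, (∑' j, f j ω) ^ p ∂P)) := by
  have hbound : ∀ᵐ ω ∂P, ∀ j, |f j ω| ≤ b j := ae_all_iff.2 hfb
  refine tendsto_integral_of_dominated_convergence (fun _ => (∑' j, b j) ^ p)
    (fun n => (Finset.aestronglyMeasurable_fun_sum _ fun j _ => hf j).pow p)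
    (integrable_const _) (fun n => ?_) ?_
  · filter_upwards [hbound] with ω hω
    have hb0 : ∀ j, 0 ≤ b j := fun j => (abs_nonneg _).trans (hω j)
    rw [norm_pow, Real.norm_eq_abs]
    refine pow_le_pow_left₀ (abs_nonneg _) ?_ p
    calc |∑ j ∈ range n, f j ω| ≤ ∑ j ∈ range n, b j :=
          (abs_sum_le_sum_abs _ _).trans (sum_le_sum fun j _ => hω j)
      _ ≤ ∑' j, b j := hb.sum_le_tsum _ fun j _ => hb0 j
  · filter_upwards [hbound] with ω hω
    exact ((hb.of_norm_bounded hω).hasSum.tendsto_sum_nat).pow p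

lemma integral_sum_range_mul_pow_four_of_uniform {Ω : Type*} [MeasurableSpace Ω] {P : Measure Ω}
    [IsProbabilityMeasure P] {Y : ℕ → Ω → ℝ} (hYmeas : ∀ j, Measurable (Y j))
    (hYindep : iIndepFun Y P)
    (hYunif : ∀ j, P.map (Y j) = volume.restrict (Set.Icc (-(1 / 2)) (1 / 2))) (a : ℕ → ℝ)
    (n : ℕ) :
    ∫ ω, (∑ j ∈ range n, Y j ω * a j) ^ 4 ∂P
      = 1 / 80 * ∑ j ∈ range n, a j ^ 4
        + 1 / 24 * ∑ k ∈ range n, a k ^ 2 * ∑ j ∈ range k, a j ^ 2 := by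
  set f : ℕ → Ω → ℝ := fun j ω => Y j ω * a j
  have hfmeas : ∀ j, Measurable (f j) := fun j => (hYmeas j).mul_const (a j)
  have hfindep : iIndepFun f P :=
    hYindep.comp (fun j x => x * a j) fun j => measurable_id.mul_const (a j)
  have hL4 : ∀ j, MemLp (f j) 4 P := fun j => MemLp.of_bound (hfmeas j).aestronglyMeasurable
    _ (ae_abs_mul_le_of_map_eq_restrict (hYmeas j).aemeasurable (hYunif j) (a j))
  have hmoment : ∀ j (k : ℕ), ∫ ω, f j ω ^ k ∂P
      = ((1 / 2) ^ (k + 1) - (-(1 / 2)) ^ (k + 1)) / (k + 1) * a j ^ k := fun j k => by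
    simp only [f, mul_pow, integral_mul_const,
      integral_pow_of_map_eq_restrict (hYmeas j).aemeasurable (hYunif j) (by norm_num)]
  have hpairs : ∑ k ∈ range n, a k ^ 2 / 12 * ∑ j ∈ range k, a j ^ 2 / 12
      = 1 / 144 * ∑ k ∈ range n, a k ^ 2 * ∑ j ∈ range k, a j ^ 2 := by
    rw [mul_sum]
    exact sum_congr rfl fun k _ => by rw [← sum_div]; ring
  have hsecond : ∀ j, ∫ ω, f j ω ^ 2 ∂P = a j ^ 2 / 12 := fun j => by rw [hmoment]; ring
  have hfourth : ∀ j, ∫ ω, f j ω ^ 4 ∂P = a j ^ 4 / 80 := fun j => by rw [hmoment]; ring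
  rw [hfindep.integral_sum_range_pow_four hfmeas hL4 fun j => by simpa using hmoment j 1]
  simp only [hsecond, hfourth]
  rw [hpairs, ← sum_div]
  ring

theorem stmt_6
    {Ω : Type*} [MeasurableSpace Ω] (P : Measure Ω) [IsProbabilityMeasure P]
    (Y : ℕ → Ω → ℝ) (hYmeas : ∀ j, Measurable (Y j))
    (hYindep : iIndepFun Y P)
    (hYunif : ∀ j, Measure.map (Y j) P = volume.restrict (Set.Icc (-(1/2) : ℝ) (1/2)))
    (a : ℕ → ℝ) (ha : Summable fun j => |a j|) :
    (∀ᵐ ω ∂P, Summable (fun j => |Y j ω * a j|)) ∧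
    ∫ ω, (∑' j, Y j ω * a j) ^ 4 ∂P
      = (1 / 80) * ∑' j, (a j) ^ 4
        + (1 / 24) * ∑' j, ∑' k, (if j < k then (a j) ^ 2 * (a k) ^ 2 else 0) := by
  have hbound : ∀ j, ∀ᵐ ω ∂P, |Y j ω * a j| ≤ |a j| / 2 := fun j =>
    ae_abs_mul_le_of_map_eq_restrict (hYmeas j).aemeasurable (hYunif j) (a j)
  refine ⟨(ae_all_iff.2 hbound).mono fun ω h =>
    (ha.div_const 2).of_nonneg_of_le (fun _ => abs_nonneg _) h, ?_⟩
  have hsq : Summable fun j => a j ^ 2 := by simpa using ha.sq_of_nonneg fun j => abs_nonneg _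
  have hfourth : Summable fun j => a j ^ 4 := by
    simpa [← pow_mul] using hsq.sq_of_nonneg fun j => sq_nonneg _
  refine tendsto_nhds_unique (tendsto_integral_sum_range_pow (ha.div_const 2)
    (fun j => ((hYmeas j).mul_const (a j)).aestronglyMeasurable) hbound 4) ?_
  simp_rw [integral_sum_range_mul_pow_four_of_uniform hYmeas hYindep hYunif]
  exact (hfourth.hasSum.tendsto_sum_nat.const_mul _).add
    ((tendsto_sum_range_mul_sum_range hsq fun j => sq_nonneg _).const_mul _)
end
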